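/- arXiv:1206.3177 — 2 statements merged into one kernel-verified Lean document; each statement's English description precedes it below -/
import Mathlib

section
/- For every n ≥ 1, the history vector of the D-iteration satisfies the recursion H_n = (I − J_{i_n}(I − P))·H_{n−1} + J_{i_n}·B; that is, the explicit formula H_n = Σ_{k=1}^n J_{i_k}·F_{k−1} and this recursion define the same sequence. -/
/-!
The fluid is conserved: each diffusion step moves `J_{i_n} F_{n-1}` from the residual `F` into
the history `H` and sends it back as `P J_{i_n} F_{n-1}`, so `F_n + (I - P) H_n = B` for all `n`.
Substituting `F_n = B - (I - P) H_n` into `H_{n+1} = H_n + J_{i_{n+1}} F_n` gives the recursion.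
-/

open Matrix

/-- The matrix `J_k`: all entries zero except the `k`-th diagonal entry, equal to 1. -/
noncomputable def Jmat {N : ℕ} (k : Fin N) : Matrix (Fin N) (Fin N) ℝ :=
  Matrix.single k k 1

/-- Residual fluid of the D-iteration: `F 0 = B`,
`F n = (I - J_{i n} + P * J_{i n}) *ᵥ F (n-1)`. -/
noncomputable def Fvec {N : ℕ} (P : Matrix (Fin N) (Fin N) ℝ) (B : Fin N → ℝ)
    (i : ℕ → Fin N) : ℕ → (Fin N → ℝ)
  | 0 => B
  | n + 1 =>
      ((1 : Matrix (Fin N) (Fin N) ℝ) - Jmat (i (n + 1)) + P * Jmat (i (n + 1))) *ᵥ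
        Fvec P B i n

/-- History of the D-iteration: `H n = ∑_{k=1}^n J_{i k} *ᵥ F (k-1)`. -/
noncomputable def Hvec {N : ℕ} (P : Matrix (Fin N) (Fin N) ℝ) (B : Fin N → ℝ)
    (i : ℕ → Fin N) (n : ℕ) : Fin N → ℝ :=
  ∑ k ∈ Finset.range n, (Jmat (i (k + 1))) *ᵥ Fvec P B i k

section DIteration

variable {N : ℕ} (P : Matrix (Fin N) (Fin N) ℝ) (B : Fin N → ℝ) (i : ℕ → Fin N)

lemma Hvec_succ (n : ℕ) :
    Hvec P B i (n + 1) = Hvec P B i n + Jmat (i (n + 1)) *ᵥ Fvec P B i n := by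
  simp [Hvec, Finset.sum_range_succ]

lemma Fvec_succ (n : ℕ) :
    Fvec P B i (n + 1) =
      Fvec P B i n - (1 - P) *ᵥ (Jmat (i (n + 1)) *ᵥ Fvec P B i n) := by
  rw [Fvec, add_mulVec, sub_mulVec, sub_mulVec, one_mulVec, one_mulVec, ← mulVec_mulVec]
  abel

lemma Fvec_add_mulVec_Hvec (n : ℕ) :
    Fvec P B i n + (1 - P) *ᵥ Hvec P B i n = B := by
  induction n with
  | zero => simp [Fvec, Hvec]
  | succ n ih =>
    conv_rhs => rw [← ih]
    rw [Fvec_succ, Hvec_succ, mulVec_add]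
    abel

lemma Fvec_eq_sub (n : ℕ) : Fvec P B i n = B - (1 - P) *ᵥ Hvec P B i n :=
  eq_sub_of_add_eq (Fvec_add_mulVec_Hvec P B i n)

end DIteration

theorem statement1_general {N : ℕ} (P : Matrix (Fin N) (Fin N) ℝ)
    (B : Fin N → ℝ) (i : ℕ → Fin N) (n : ℕ) :
    Hvec P B i (n + 1) =
      ((1 : Matrix (Fin N) (Fin N) ℝ) -
          Jmat (i (n + 1)) * ((1 : Matrix (Fin N) (Fin N) ℝ) - P)) *ᵥ Hvec P B i n +
        Jmat (i (n + 1)) *ᵥ B := by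
  rw [Hvec_succ, Fvec_eq_sub, sub_mulVec 1 (Jmat (i (n + 1)) * (1 - P)), one_mulVec,
    mulVec_sub, mulVec_mulVec]
  abel

/-- for every `n ≥ 1`,
`H n = (I - J_{i n} (I - P)) *ᵥ H (n-1) + J_{i n} *ᵥ B`. -/
theorem statement1 {N : ℕ} (hN : 1 ≤ N) (P : Matrix (Fin N) (Fin N) ℝ)
    (B : Fin N → ℝ) (i : ℕ → Fin N) (n : ℕ) :
    Hvec P B i (n + 1) =
      ((1 : Matrix (Fin N) (Fin N) ℝ) -
          Jmat (i (n + 1)) * ((1 : Matrix (Fin N) (Fin N) ℝ) - P)) *ᵥ Hvec P B i n +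
        Jmat (i (n + 1)) *ᵥ B :=
  statement1_general P B i n
end

section
/- Let P′ ∈ ℝ^{N×N} be a matrix with nonnegative entries and let V ∈ ℝ^N be a vector with all entries strictly positive such that Vᵀ·P′ = Vᵀ. Then the weighted norm |F_n|_V of the residual fluid of the D-iteration applied to (P′, B) is non-increasing: for every n ≥ 0, |F_{n+1}|_V ≤ |F_n|_V. -/
open Matrix

/-! The step `F ↦ (I - J_k + P' J_k) F` removes the fluid at node `k` and redistributes it along
the `k`-th column of `P'`. Removing it lowers `|F|_V` by exactly `|F_k| V_k`; since `P'` is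
nonnegative and `Vᵀ P' = Vᵀ`, the redistributed fluid has `V`-weighted norm at most
`|F_k| ∑ₐ V_a P'_{ak} = |F_k| V_k`. -/

section WeightedNorm

variable {ι : Type*} [Fintype ι]

def weightedNorm (V x : ι → ℝ) : ℝ :=
  ∑ a, |x a * V a|

theorem weightedNorm_add_le (V x y : ι → ℝ) :
    weightedNorm V (x + y) ≤ weightedNorm V x + weightedNorm V y := by
  rw [weightedNorm, weightedNorm, weightedNorm, ← Finset.sum_add_distrib]
  gcongr with a
  rw [Pi.add_apply, add_mul]
  exact abs_add_le _ _

theorem weightedNorm_update_zero_add [DecidableEq ι] (V x : ι → ℝ) (k : ι) :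
    weightedNorm V (Function.update x k 0) + |x k * V k| = weightedNorm V x := by
  rw [weightedNorm, weightedNorm, ← Finset.add_sum_erase _ _ (Finset.mem_univ k),
    ← Finset.add_sum_erase _ _ (Finset.mem_univ k)]
  have hrest : ∀ a ∈ Finset.univ.erase k,
      |Function.update x k 0 a * V a| = |x a * V a| := fun a ha ↦ by
    rw [Function.update_of_ne (Finset.ne_of_mem_erase ha)]
  rw [Finset.sum_congr rfl hrest, Function.update_self]
  simp only [zero_mul, abs_zero, zero_add, add_comm]

theorem weightedNorm_mul_const_of_sum_mul_eq {V c : ι → ℝ} {k : ι} (hV : ∀ a, 0 ≤ V a)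
    (hc : ∀ a, 0 ≤ c a) (hVc : ∑ a, V a * c a = V k) (t : ℝ) :
    weightedNorm V (fun a ↦ c a * t) = |t * V k| := by
  rw [weightedNorm, abs_mul, abs_of_nonneg (hV k), ← hVc, Finset.mul_sum]
  refine Finset.sum_congr rfl fun a _ ↦ ?_
  rw [abs_mul, abs_mul, abs_of_nonneg (hc a), abs_of_nonneg (hV a)]
  ring

theorem weightedNorm_update_zero_add_mul_le [DecidableEq ι] {V c : ι → ℝ} {k : ι}
    (hV : ∀ a, 0 ≤ V a) (hc : ∀ a, 0 ≤ c a) (hVc : ∑ a, V a * c a = V k) (x : ι → ℝ) :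
    weightedNorm V (Function.update x k 0 + fun a ↦ c a * x k) ≤ weightedNorm V x :=
  calc weightedNorm V (Function.update x k 0 + fun a ↦ c a * x k)
      _ ≤ weightedNorm V (Function.update x k 0) + weightedNorm V (fun a ↦ c a * x k) :=
        weightedNorm_add_le V _ _
      _ = weightedNorm V x := by
        rw [weightedNorm_mul_const_of_sum_mul_eq hV hc hVc, weightedNorm_update_zero_add]

end WeightedNorm

section DIteration

variable {N : ℕ}

theorem Jmat_mulVec (k : Fin N) (x : Fin N → ℝ) : Jmat k *ᵥ x = Pi.single k (x k) := by
  rw [Jmat, single_mulVec, one_mul]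
  rfl

theorem one_sub_Jmat_add_mul_Jmat_mulVec (P : Matrix (Fin N) (Fin N) ℝ) (k : Fin N)
    (x : Fin N → ℝ) :
    (1 - Jmat k + P * Jmat k) *ᵥ x = Function.update x k 0 + fun a ↦ P a k * x k := by
  ext a
  rw [add_mulVec, sub_mulVec, one_mulVec, ← mulVec_mulVec, Jmat_mulVec, mulVec_single]
  by_cases h : a = k
  · subst h
    simp [mul_comm]
  · simp [h, mul_comm]

theorem Fvec_succ_s9 (P : Matrix (Fin N) (Fin N) ℝ) (B : Fin N → ℝ) (i : ℕ → Fin N) (n : ℕ) :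
    Fvec P B i (n + 1) =
      Function.update (Fvec P B i n) (i (n + 1)) 0 +
        fun a ↦ P a (i (n + 1)) * Fvec P B i n (i (n + 1)) :=
  one_sub_Jmat_add_mul_Jmat_mulVec P _ _

end DIteration

theorem statement9_general {N : ℕ} (P' : Matrix (Fin N) (Fin N) ℝ)
    (B : Fin N → ℝ) (i : ℕ → Fin N) (V : Fin N → ℝ)
    (hP'nn : ∀ a b, 0 ≤ P' a b) (hV : ∀ a, 0 < V a)
    (hVeig : ∀ b, ∑ a, V a * P' a b = V b) (n : ℕ) :
    (∑ a, |Fvec P' B i (n + 1) a * V a|) ≤ ∑ a, |Fvec P' B i n a * V a| := by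
  change weightedNorm V (Fvec P' B i (n + 1)) ≤ weightedNorm V (Fvec P' B i n)
  rw [Fvec_succ_s9]
  exact weightedNorm_update_zero_add_mul_le (fun a ↦ (hV a).le) (fun a ↦ hP'nn a _)
    (hVeig _) _

/-- if `P'` is nonnegative and `V` is strictly positive with `Vᵀ P' = Vᵀ`,
then the weighted norm `|F n|_V = ∑ a, |F n a * V a|` is non-increasing. -/
theorem statement9 {N : ℕ} (hN : 1 ≤ N) (P' : Matrix (Fin N) (Fin N) ℝ)
    (B : Fin N → ℝ) (i : ℕ → Fin N) (V : Fin N → ℝ)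
    (hP'nn : ∀ a b, 0 ≤ P' a b) (hV : ∀ a, 0 < V a)
    (hVeig : ∀ b, ∑ a, V a * P' a b = V b) (n : ℕ) :
    (∑ a, |Fvec P' B i (n + 1) a * V a|) ≤ ∑ a, |Fvec P' B i n a * V a| :=
  statement9_general P' B i V hP'nn hV hVeig n
end
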